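/- In the girth-4 setting: if for some i ∈ {1,2,3,4} there exist adjacent vertices u ∈ T_{x_i} and v ∈ T_{x_{i+2}} (indices modulo 4), then T_{{x_{i+1},x_{i+3}}} = ∅; hence T₂ = T_{{x_i,x_{i+2}}}. -/

import Mathlib

/-- The adjacency matrix of a simple graph over `ℝ` is Hermitian. -/
lemma adjMatrix_isHermitian {V : Type*} [Fintype V] (G : SimpleGraph V)
    [DecidableRel G.Adj] : ((G.adjMatrix ℝ)).IsHermitian := by
  rw [Matrix.IsHermitian, Matrix.conjTranspose_eq_transpose_of_trivial]
  exact G.isSymm_adjMatrix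

/-- The number of eigenvalues (counted with multiplicity) of the real adjacency matrix of `G`
satisfying the predicate `p`. -/
noncomputable def eigCount {V : Type*} [Fintype V] [DecidableEq V]
    (G : SimpleGraph V) (p : ℝ → Prop) : ℕ := by
  classical
  exact (Finset.univ.filter fun i =>
    p ((adjMatrix_isHermitian G).eigenvalues i)).card
/-- `HasMinor G H` : `H` is a minor of `G`, witnessed by a family of pairwise disjoint
nonempty branch sets, each inducing a connected subgraph of `G`, such that every edge of `H`
is realized by an edge of `G` between the corresponding branch sets. -/
def HasMinor {V : Type*} {W : Type*} (G : SimpleGraph V) (H : SimpleGraph W) : Prop :=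
  ∃ B : W → Set V,
    (∀ w, (B w).Nonempty) ∧
    (Pairwise fun w₁ w₂ => Disjoint (B w₁) (B w₂)) ∧
    (∀ w, (G.induce (B w)).Connected) ∧
    (∀ ⦃w₁ w₂⦄, H.Adj w₁ w₂ → ∃ a ∈ B w₁, ∃ b ∈ B w₂, G.Adj a b)

/-- `G` is planar in the sense of Wagner: it has neither `K₅` nor `K_{3,3}` as a minor. -/
def WagnerPlanar {V : Type*} (G : SimpleGraph V) : Prop :=
  ¬ HasMinor G (⊤ : SimpleGraph (Fin 5)) ∧
    ¬ HasMinor G (completeBipartiteGraph (Fin 3) (Fin 3))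
/-- For a 4-cycle `x₀x₁x₂x₃x₀` in `G` and `S ⊆ Fin 4`, the set
`T_S = {v ∉ {x₀,x₁,x₂,x₃} : N(v) ∩ {x₀,x₁,x₂,x₃} = {x i : i ∈ S}}`. -/
def TS {V : Type*} (G : SimpleGraph V) (x : Fin 4 → V) (S : Set (Fin 4)) : Set V :=
  {v | v ∉ Set.range x ∧ ∀ i, G.Adj v (x i) ↔ i ∈ S}

/-- The set `T_j` of vertices outside the 4-cycle having exactly `j` neighbors among
`{x₀,x₁,x₂,x₃}`. -/
def Tdeg {V : Type*} (G : SimpleGraph V) (x : Fin 4 → V) (j : ℕ) : Set V :=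
  {v | v ∉ Set.range x ∧ {i : Fin 4 | G.Adj v (x i)}.ncard = j}

/-! Relabel the cycle so that `i = 0` and let `w ∈ T_{x₁,x₃}`. If `w` is adjacent to `u` or `v`,
then `{x₀, x₂, w}` and `{x₁, x₃, uv}` (the edge `uv` contracted) are the sides of a `K_{3,3}` minor.
Otherwise, by triangle-freeness, `x₀, x₁, x₂, x₃, u, v, w` induce one fixed 7-vertex graph, and
the quadratic form of its adjacency matrix minus the identity is positive definite on an explicit
plane; extending that plane by zero to `G` forces two eigenvalues of `G` above `1`. Finally a
vertex of `T₂` sees two non-consecutive cycle vertices, so `T₂ = T_{x₀,x₂} ∪ T_{x₁,x₃}`. -/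

open Function Matrix Finset

lemma exists_mul_add_mul_eq_zero_of_card_le_one {ι : Type*} {s : Finset ι} (hs : #s ≤ 1)
    (f g : ι → ℝ) : ∃ a b : ℝ, (a ≠ 0 ∨ b ≠ 0) ∧ ∀ i ∈ s, a * f i + b * g i = 0 := by
  rcases s.eq_empty_or_nonempty with rfl | ⟨i₀, hi₀⟩
  · exact ⟨1, 0, by simp, by simp⟩
  have hs' : ∀ i ∈ s, i = i₀ := fun i hi => Finset.card_le_one.mp hs i hi i₀ hi₀
  by_cases hf : f i₀ = 0
  · exact ⟨1, 0, by simp, fun i hi => by simp [hs' i hi, hf]⟩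
  · exact ⟨g i₀, -f i₀, Or.inr (neg_ne_zero.mpr hf), fun i hi => by rw [hs' i hi]; ring⟩

lemma quadratic_pos_of_sq_lt_mul {P Q R a b : ℝ} (hP : 0 < P) (hR : R ^ 2 < P * Q)
    (hab : a ≠ 0 ∨ b ≠ 0) : 0 < a ^ 2 * P + 2 * a * b * R + b ^ 2 * Q := by
  rcases eq_or_ne b 0 with rfl | hb
  · have ha : a ≠ 0 := hab.resolve_right (not_not.mpr rfl)
    simpa using mul_pos (pow_pos (abs_pos.mpr ha) 2) hP
  · have key : P * (a ^ 2 * P + 2 * a * b * R + b ^ 2 * Q) =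
        (a * P + b * R) ^ 2 + b ^ 2 * (P * Q - R ^ 2) := by ring
    have : 0 < b ^ 2 * (P * Q - R ^ 2) := mul_pos (by positivity) (by linarith)
    nlinarith [sq_nonneg (a * P + b * R)]

namespace Function.Injective

variable {m n R : Type*} [Fintype m] [Fintype n] [CommSemiring R] {p : m → n}

lemma sum_extend_zero_mul (hp : Injective p) (c : m → R) (g : n → R) :
    ∑ v, extend p c 0 v * g v = ∑ j, c j * g (p j) := by
  classical
  rw [← Finset.sum_subset (Finset.subset_univ (univ.map ⟨p, hp⟩)), Finset.sum_map]
  · simp [hp.extend_apply]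
  · intro v _ hv
    rw [extend_apply' _ _ _ (by simpa using hv)]
    simp

lemma dotProduct_mulVec_extend (hp : Injective p) (B : Matrix n n R) (c d : m → R) :
    extend p c 0 ⬝ᵥ B *ᵥ extend p d 0 = c ⬝ᵥ B.submatrix p p *ᵥ d := by
  simp only [dotProduct, mulVec, hp.sum_extend_zero_mul]
  refine Finset.sum_congr rfl fun j _ => congrArg (c j * ·) ?_
  simp only [mul_comm (B (p j) _), hp.sum_extend_zero_mul, submatrix_apply]

end Function.Injective

namespace Matrix.IsHermitian

variable {n : Type*} [Fintype n] [DecidableEq n] {A : Matrix n n ℝ} (hA : A.IsHermitian)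

lemma dotProduct_sub_smul_one_mulVec_eq_sum (t : ℝ) (x : n → ℝ) :
    x ⬝ᵥ (A - t • 1) *ᵥ x =
      ∑ i, (hA.eigenvalues i - t) * ((hA.eigenvectorUnitary : Matrix n n ℝ)ᵀ *ᵥ x) i ^ 2 := by
  set U : Matrix n n ℝ := ↑hA.eigenvectorUnitary
  have hU : U * Uᵀ = 1 := by
    simpa [star_eq_conjTranspose] using Unitary.mul_star_self_of_mem hA.eigenvectorUnitary.2
  have hAU : A = U * diagonal hA.eigenvalues * Uᵀ := by
    conv_lhs => rw [hA.spectral_theorem]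
    simp [Unitary.conjStarAlgAut_apply, U, star_eq_conjTranspose]
  have hshift : A - t • 1 = U * (diagonal hA.eigenvalues - t • 1) * Uᵀ := by
    rw [mul_sub, sub_mul, mul_smul_comm, mul_one, smul_mul_assoc, hU, ← hAU]
  rw [hshift, Matrix.mul_assoc, ← mulVec_mulVec, ← mulVec_mulVec, dotProduct_mulVec,
    ← mulVec_transpose]
  generalize Uᵀ *ᵥ x = c
  simp only [dotProduct, sub_mulVec, mulVec_diagonal, smul_mulVec, one_mulVec, Pi.sub_apply,
    Pi.smul_apply, smul_eq_mul]
  exact Finset.sum_congr rfl fun i _ => by ring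

lemma dotProduct_sub_smul_one_mulVec_nonpos (t : ℝ) {x : n → ℝ}
    (hx : ∀ i, t < hA.eigenvalues i → ((hA.eigenvectorUnitary : Matrix n n ℝ)ᵀ *ᵥ x) i = 0) :
    x ⬝ᵥ (A - t • 1) *ᵥ x ≤ 0 := by
  rw [hA.dotProduct_sub_smul_one_mulVec_eq_sum]
  refine Finset.sum_nonpos fun i _ => ?_
  by_cases hi : t < hA.eigenvalues i
  · simp [hx i hi]
  · exact mul_nonpos_of_nonpos_of_nonneg (by linarith [not_lt.mp hi]) (sq_nonneg _)

theorem two_le_card_lt_eigenvalues (t : ℝ) (y z : n → ℝ)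
    (hy : 0 < y ⬝ᵥ (A - t • 1) *ᵥ y)
    (hyz : (y ⬝ᵥ (A - t • 1) *ᵥ z) ^ 2 < (y ⬝ᵥ (A - t • 1) *ᵥ y) * (z ⬝ᵥ (A - t • 1) *ᵥ z)) :
    2 ≤ #{i | t < hA.eigenvalues i} := by
  by_contra! hcard
  -- Some nonzero combination of `y` and `z` is orthogonal to every eigenvector with eigenvalue
  -- above `t`, since there is at most one; on it the form of `A - t • 1` is nonpositive.
  set U := (hA.eigenvectorUnitary : Matrix n n ℝ)ᵀ
  set B := A - t • 1
  obtain ⟨a, b, hab, horth⟩ :=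
    exists_mul_add_mul_eq_zero_of_card_le_one (Nat.lt_succ_iff.mp hcard) (U *ᵥ y) (U *ᵥ z)
  have hle := hA.dotProduct_sub_smul_one_mulVec_nonpos t (x := a • y + b • z) fun i hi => by
    simpa [mulVec_add, mulVec_smul] using horth i (by simpa using hi)
  have hBsymm : z ⬝ᵥ B *ᵥ y = y ⬝ᵥ B *ᵥ z := by
    have hBT : Bᵀ = B := by
      rw [transpose_sub, transpose_smul, transpose_one, show Aᵀ = A from IsSymm.eq hA]
    rw [dotProduct_mulVec, ← mulVec_transpose, hBT, dotProduct_comm]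
  have hexpand : (a • y + b • z) ⬝ᵥ B *ᵥ (a • y + b • z) =
      a ^ 2 * (y ⬝ᵥ B *ᵥ y) + 2 * a * b * (y ⬝ᵥ B *ᵥ z) + b ^ 2 * (z ⬝ᵥ B *ᵥ z) := by
    simp only [mulVec_add, mulVec_smul, dotProduct_add, add_dotProduct, dotProduct_smul,
      smul_dotProduct, smul_eq_mul, hBsymm]
    ring
  linarith [quadratic_pos_of_sq_lt_mul hy hyz hab]

theorem two_le_card_lt_eigenvalues_of_submatrix (t : ℝ) {m : Type*} [Fintype m] [DecidableEq m]
    {p : m → n} (hp : Injective p) (y z : m → ℝ)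
    (hy : 0 < y ⬝ᵥ (A.submatrix p p - t • 1) *ᵥ y)
    (hyz : (y ⬝ᵥ (A.submatrix p p - t • 1) *ᵥ z) ^ 2 <
      (y ⬝ᵥ (A.submatrix p p - t • 1) *ᵥ y) * (z ⬝ᵥ (A.submatrix p p - t • 1) *ᵥ z)) :
    2 ≤ #{i | t < hA.eigenvalues i} := by
  have key (c d : m → ℝ) : extend p c 0 ⬝ᵥ (A - t • 1) *ᵥ extend p d 0 =
      c ⬝ᵥ (A.submatrix p p - t • 1) *ᵥ d := by
    have hsub : (A - t • 1).submatrix p p = A.submatrix p p - t • 1 := by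
      ext i j
      simp [one_apply, hp.eq_iff]
    rw [hp.dotProduct_mulVec_extend, hsub]
  exact hA.two_le_card_lt_eigenvalues t (extend p y 0) (extend p z 0)
    (by rwa [key]) (by rwa [key, key, key])

end Matrix.IsHermitian

open SimpleGraph

section Minor

variable {V ι : Type*} {G : SimpleGraph V} {p : ι → V}

lemma hasMinor_of_injective {W : Type*} {H : SimpleGraph W} (hp : Injective p)
    (B : W → Set ι) (hdisj : Pairwise (Disjoint on B))
    (hconn : ∀ w, (G.induce (p '' B w)).Connected)
    (hadj : ∀ ⦃w₁ w₂⦄, H.Adj w₁ w₂ → ∃ a ∈ B w₁, ∃ b ∈ B w₂, G.Adj (p a) (p b)) :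
    HasMinor G H := by
  refine ⟨fun w => p '' B w, fun w => Set.nonempty_coe_sort.mp (hconn w).nonempty,
    fun w₁ w₂ h => (Set.disjoint_image_iff hp).mpr (hdisj h), hconn, fun w₁ w₂ h => ?_⟩
  obtain ⟨a, ha, b, hb, hab⟩ := hadj h
  exact ⟨p a, Set.mem_image_of_mem p ha, p b, Set.mem_image_of_mem p hb, hab⟩

lemma hasMinor_completeBipartiteGraph {α β : Type*} (hp : Injective p)
    (L : α → Set ι) (R : β → Set ι) (hdisj : Pairwise (Disjoint on Sum.elim L R))
    (hconn : ∀ s, (G.induce (p '' Sum.elim L R s)).Connected)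
    (hadj : ∀ a b, ∃ i ∈ L a, ∃ j ∈ R b, G.Adj (p i) (p j)) :
    HasMinor G (completeBipartiteGraph α β) := by
  refine hasMinor_of_injective hp _ hdisj hconn ?_
  rintro (a | b) (a' | b') h
  · simp at h
  · simpa using hadj a b'
  · obtain ⟨i, hi, j, hj, hij⟩ := hadj a' b
    exact ⟨j, hj, i, hi, hij.symm⟩
  · simp at h

end Minor

namespace FourCycle

variable {V : Type*} {G : SimpleGraph V} {x : Fin 4 → V}

lemma mem_TS_iff {S : Set (Fin 4)} {v : V} :
    v ∈ TS G x S ↔ v ∉ Set.range x ∧ {i | G.Adj v (x i)} = S := by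
  simp [TS, Set.ext_iff]

lemma TS_comp_perm (e : Equiv.Perm (Fin 4)) (S : Set (Fin 4)) :
    TS G (x ∘ e) S = TS G x (e '' S) := by
  ext v
  simp only [TS, EquivLike.range_comp, Function.comp_apply, e.image_eq_preimage_symm,
    Set.mem_preimage]
  exact and_congr_right fun _ =>
    ⟨fun h i => by simpa using h (e.symm i), fun h i => by simpa using h (e i)⟩

lemma Tdeg_comp_perm (e : Equiv.Perm (Fin 4)) (j : ℕ) : Tdeg G (x ∘ e) j = Tdeg G x j := by
  ext v
  simp only [Tdeg, Set.mem_ofPred_eq, EquivLike.range_comp, Function.comp_apply]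
  rw [show {i | G.Adj v (x (e i))} = e ⁻¹' {i | G.Adj v (x i)} from rfl,
    Set.ncard_preimage_of_injective_subset_range e.injective (by simp)]

lemma ncard_eq_two_iff_of_forall_mem_succ_notMem {S : Set (Fin 4)} (hS : ∀ i ∈ S, i + 1 ∉ S) :
    S.ncard = 2 ↔ S = {0, 2} ∨ S = {1, 3} := by
  refine ⟨fun h => ?_, by rintro (rfl | rfl) <;> exact Set.ncard_pair (by decide)⟩
  obtain ⟨a, b, hab, rfl⟩ := Set.ncard_eq_two.mp h
  fin_cases a <;> fin_cases b <;> simp_all [Set.pair_comm]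

lemma injective_vertices {u v w : V} (hinj : Injective x) (hu : u ∈ TS G x {0})
    (hv : v ∈ TS G x {2}) (hw : w ∈ TS G x {1, 3}) (huv : G.Adj u v) :
    Injective ![x 0, x 1, x 2, x 3, u, v, w] := by
  have huw : u ≠ w := fun h => by simpa using (hw.2 0).mp (h ▸ (hu.2 0).mpr rfl)
  have hvw : v ≠ w := fun h => by simpa using (hw.2 2).mp (h ▸ (hv.2 2).mpr rfl)
  have := hu.1; have := hv.1; have := hw.1; have := huv.ne
  intro a b h
  fin_cases a <;> fin_cases b <;> simp_all [hinj.eq_iff]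

lemma adj_add_three (hcyc : ∀ i, G.Adj (x i) (x (i + 1))) (i : Fin 4) :
    G.Adj (x i) (x (i + 3)) := by
  simpa [add_assoc] using (hcyc (i + 3)).symm

lemma hasMinor_K33 (hcyc : ∀ i, G.Adj (x i) (x (i + 1))) (hinj : Injective x) {u v w : V}
    (hu : u ∈ TS G x {0}) (hv : v ∈ TS G x {2}) (hw : w ∈ TS G x {1, 3}) (huv : G.Adj u v)
    (hadj : G.Adj u w ∨ G.Adj v w) : HasMinor G (completeBipartiteGraph (Fin 3) (Fin 3)) := by
  refine hasMinor_completeBipartiteGraph (injective_vertices hinj hu hv hw huv)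
    ![{0}, {2}, {6}] ![{1}, {3}, {4, 5}] ?_ ?_ ?_
  · rintro (a | a) (b | b) hab <;> fin_cases a <;> fin_cases b <;> simp_all [onFun]
  · rintro (a | a) <;> fin_cases a <;> dsimp
    all_goals first
      | (rw [Set.image_insert_eq, Set.image_singleton]; exact induce_pair_connected_of_adj huv)
      | (rw [Set.image_singleton]; simp)
  · intro a b
    fin_cases a <;> fin_cases b <;>
      simp [hu.2, hv.2, hw.2, G.adj_comm (x _) u, G.adj_comm (x _) v, G.adj_comm w, hadj] <;>
      first | exact hcyc _ | exact adj_add_three hcyc _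

lemma not_adj_and_adj_succ
    (htf : G.CliqueFree 3) (hcyc : ∀ i, G.Adj (x i) (x (i + 1))) (v : V) (i : Fin 4) :
    ¬ (G.Adj v (x i) ∧ G.Adj v (x (i + 1))) := fun h => by
  classical
  exact htf {v, x i, x (i + 1)} (is3Clique_triple_iff.mpr ⟨h.1, h.2, hcyc i⟩)

lemma adj_iff_cycleGraph_adj
    (htf : G.CliqueFree 3) (hcyc : ∀ i, G.Adj (x i) (x (i + 1))) (j k : Fin 4) :
    G.Adj (x j) (x k) ↔ (cycleGraph 4).Adj j k := by
  have hdiag (i : Fin 4) : ¬ G.Adj (x i) (x (i + 2)) := fun h =>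
    not_adj_and_adj_succ htf hcyc (x (i + 2)) i
      ⟨h.symm, by simpa [add_assoc] using adj_add_three hcyc (i + 2)⟩
  fin_cases j <;> fin_cases k <;>
    simp +decide only [Fin.isValue, Fin.zero_eta, Fin.mk_one, Fin.reduceFinMk, SimpleGraph.irrefl,
      iff_true, iff_false] <;>
    first | exact hcyc _ | exact adj_add_three hcyc _ | exact hdiag _

lemma Tdeg_two_eq_union (htf : G.CliqueFree 3) (hcyc : ∀ i, G.Adj (x i) (x (i + 1))) :
    Tdeg G x 2 = TS G x {0, 2} ∪ TS G x {1, 3} := by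
  ext v
  simp only [Set.mem_union, mem_TS_iff, Tdeg, Set.mem_ofPred_eq]
  rw [ncard_eq_two_iff_of_forall_mem_succ_notMem (S := {i | G.Adj v (x i)})
    fun i hi hi1 => not_adj_and_adj_succ htf hcyc v i ⟨hi, hi1⟩]
  tauto

lemma submatrix_adjMatrix_vertices [DecidableRel G.Adj]
    (htf : G.CliqueFree 3) (hcyc : ∀ i, G.Adj (x i) (x (i + 1))) {u v w : V}
    (hu : u ∈ TS G x {0}) (hv : v ∈ TS G x {2}) (hw : w ∈ TS G x {1, 3}) (huv : G.Adj u v)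
    (huw : ¬ G.Adj u w) (hvw : ¬ G.Adj v w) :
    (G.adjMatrix ℝ).submatrix ![x 0, x 1, x 2, x 3, u, v, w] ![x 0, x 1, x 2, x 3, u, v, w] =
      !![0, 1, 0, 1, 1, 0, 0;
         1, 0, 1, 0, 0, 0, 1;
         0, 1, 0, 1, 0, 1, 0;
         1, 0, 1, 0, 0, 0, 1;
         1, 0, 0, 0, 0, 1, 0;
         0, 0, 1, 0, 1, 0, 0;
         0, 1, 0, 1, 0, 0, 0] := by
  ext a b
  fin_cases a <;> fin_cases b <;>
    simp +decide [adjMatrix_apply, adj_iff_cycleGraph_adj htf hcyc, hu.2, hv.2, hw.2,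
      G.adj_comm (x _) u, G.adj_comm (x _) v, G.adj_comm (x _) w, G.adj_comm w u,
      G.adj_comm w v, huv, huv.symm, huw, hvw]

theorem one_lt_eigCount [Fintype V] [DecidableEq V]
    (htf : G.CliqueFree 3) (hcyc : ∀ i, G.Adj (x i) (x (i + 1))) (hinj : Injective x)
    {u v w : V} (hu : u ∈ TS G x {0}) (hv : v ∈ TS G x {2}) (hw : w ∈ TS G x {1, 3})
    (huv : G.Adj u v) (huw : ¬ G.Adj u w) (hvw : ¬ G.Adj v w) : 1 < eigCount G (1 < ·) := by
  classical
  have h := (adjMatrix_isHermitian G).two_le_card_lt_eigenvalues_of_submatrix 1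
    (injective_vertices hinj hu hv hw huv) ![4, 4, 4, 4, 3, 3, 3] ![-1, 2, -1, 2, -6, -6, 4] ?_ ?_
  · have : 2 ≤ eigCount G (1 < ·) := by
      unfold eigCount
      convert h
    omega
  all_goals
    rw [submatrix_adjMatrix_vertices htf hcyc hu hv hw huv huw hvw]
    simp [dotProduct, mulVec, Fin.sum_univ_seven, one_apply, Matrix.cons_val]
    norm_num

theorem TS_one_three_eq_empty [Fintype V] [DecidableEq V]
    (htf : G.CliqueFree 3) (hcyc : ∀ i, G.Adj (x i) (x (i + 1)))
    (hl : eigCount G (1 < ·) ≤ 1) (hplanar : WagnerPlanar G) (hinj : Injective x) {u v : V}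
    (hu : u ∈ TS G x {0}) (hv : v ∈ TS G x {2}) (huv : G.Adj u v) : TS G x {1, 3} = ∅ := by
  refine Set.eq_empty_of_forall_notMem fun w hw => ?_
  by_cases hadj : G.Adj u w ∨ G.Adj v w
  · exact hplanar.2 (hasMinor_K33 hcyc hinj hu hv hw huv hadj)
  · obtain ⟨huw, hvw⟩ := not_or.mp hadj
    exact (one_lt_eigCount htf hcyc hinj hu hv hw huv huw hvw).not_ge hl

end FourCycle

open FourCycle

theorem girth_four_opposite_edge_kills_other_T2_general {V : Type*} [Fintype V] [DecidableEq V] (G : SimpleGraph V)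
    (htf : G.CliqueFree 3)
    (hl : eigCount G (fun t => 1 < t) ≤ 1) (hplanar : WagnerPlanar G)
    (x : Fin 4 → V) (hinj : Function.Injective x)
    (hcyc : ∀ i, G.Adj (x i) (x (i + 1))) :
    ∀ i : Fin 4, (∃ u ∈ TS G x {i}, ∃ v ∈ TS G x {i + 2}, G.Adj u v) →
      TS G x {i + 1, i + 3} = ∅ ∧ Tdeg G x 2 = TS G x {i, i + 2} := by
  rintro i ⟨u, hu, v, hv, huv⟩
  set y := x ∘ Equiv.addLeft i
  have hTS (S : Set (Fin 4)) : TS G y S = TS G x ((i + ·) '' S) := TS_comp_perm _ S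
  have hcycy (j : Fin 4) : G.Adj (y j) (y (j + 1)) := by simpa [y, add_assoc] using hcyc (i + j)
  have hempty : TS G y {1, 3} = ∅ := TS_one_three_eq_empty htf hcycy hl hplanar
    (hinj.comp (Equiv.injective _)) (by simpa [hTS]) (by simpa [hTS]) huv
  have hT2 := Tdeg_two_eq_union htf hcycy
  rw [hempty, Set.union_empty, Tdeg_comp_perm] at hT2
  simp only [hTS, Set.image_insert_eq, Set.image_singleton, add_zero] at hempty hT2
  exact ⟨hempty, hT2⟩

/-- in the girth-4 setting, if for some `i` there are adjacent vertices
`u ∈ T_{x_i}` and `v ∈ T_{x_{i+2}}`, then `T_{{x_{i+1},x_{i+3}}} = ∅`, hence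
`T₂ = T_{{x_i,x_{i+2}}}`. -/
theorem girth_four_opposite_edge_kills_other_T2 {V : Type*} [Fintype V] [DecidableEq V] (G : SimpleGraph V)
    (hconn : G.Connected) (htf : G.CliqueFree 3)
    (hl : eigCount G (fun t => 1 < t) ≤ 1) (hplanar : WagnerPlanar G)
    (hgirth : G.egirth = 4) (x : Fin 4 → V) (hinj : Function.Injective x)
    (hcyc : ∀ i, G.Adj (x i) (x (i + 1))) :
    ∀ i : Fin 4, (∃ u ∈ TS G x {i}, ∃ v ∈ TS G x {i + 2}, G.Adj u v) →
      TS G x {i + 1, i + 3} = ∅ ∧ Tdeg G x 2 = TS G x {i, i + 2} :=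
  girth_four_opposite_edge_kills_other_T2_general G htf hl hplanar x hinj hcyc
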